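/- In the stochastic volatility model with transition density q_θ(x₁,x₂) = (2πσ²)^{-1/2} exp(−(x₂−φx₁)²/(2σ²)) and emission density g_θ as above, for every x₀ and y₁, y₂ ≠ 0, the two-step integrated density D_{θ,x₀}(y_{0:2}) = ∬ q_θ(x₀,x₁) g_θ(x₁,y₁) q_θ(x₁,x₂) g_θ(x₂,y₂) dx₁ dx₂ satisfies both bounds: D ≤ 1/(|y₁||y₂|√(2πσ²)√(2πe)) and D ≤ (e^{σ²/8}/(2πβ^{1−φ})) · ((1+φ)e^{−1}/y₁²)^{(1+φ)/2}. -/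

import Mathlib

/-!
Both bounds integrate one variable out exactly against a Gaussian transition density and
bound what is left by a supremum. For the first, `g(·, y₂) ≤ 1 / (|y₂| √(2πe))` and
`∫ q(x₁, ·) = 1` bound the inner integral, then `q ≤ (2πσ²)^{-1/2}` and `∫ g(·, y₁) = 1 / |y₁|`
(substitute `u = e^{-x/2}`) the outer one. For the second, `g(x₂, y₂) ≤ (2πβ²)^{-1/2} e^{-x₂/2}`,
whose Gaussian moment is `e^{-φx₁/2 + σ²/8}`; the remaining factor `g(x₁, y₁) e^{-φx₁/2}` is at most
the maximum over `x` of `exp(-(1+φ)x/2 - y₁² e^{-x} / (2β²))`, and `∫ q(x₀, ·) = 1`.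
-/

open MeasureTheory Filter

/-- Emission density of the stochastic volatility model. -/
noncomputable def svg (β x y : ℝ) : ℝ :=
  (Real.sqrt (2 * Real.pi * β ^ 2))⁻¹ *
    Real.exp (-x / 2 - y ^ 2 * Real.exp (-x) / (2 * β ^ 2))

/-- Transition density of the stochastic volatility model:
`q_θ(x₁,x₂) = (2πσ²)^{-1/2} exp(−(x₂ − φx₁)²/(2σ²))`. -/
noncomputable def svq (σ φ x₁ x₂ : ℝ) : ℝ :=
  (Real.sqrt (2 * Real.pi * σ ^ 2))⁻¹ *
    Real.exp (-(x₂ - φ * x₁) ^ 2 / (2 * σ ^ 2))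

open Real Set ProbabilityTheory
open scoped NNReal

theorem integral_mul_le_of_le {α : Type*} [MeasurableSpace α] {μ : Measure α} {u v : α → ℝ}
    {M : ℝ} (hu : Integrable u μ) (hu₀ : ∀ x, 0 ≤ u x) (hv₀ : ∀ x, 0 ≤ v x)
    (hv : ∀ x, v x ≤ M) : ∫ x, u x * v x ∂μ ≤ M * ∫ x, u x ∂μ := by
  rw [← integral_const_mul]
  refine integral_mono_of_nonneg (ae_of_all _ fun x ↦ mul_nonneg (hu₀ x) (hv₀ x))
    (hu.const_mul M) (ae_of_all _ fun x ↦ ?_)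
  show u x * v x ≤ M * u x
  rw [mul_comm M]
  exact mul_le_mul_of_nonneg_left (hv x) (hu₀ x)

theorem exp_neg_mul_sub_mul_exp_neg_le {a c : ℝ} (ha : 0 < a) (hc : 0 < c) (x : ℝ) :
    exp (-(c * x) - a * exp (-x)) ≤ (c / (a * exp 1)) ^ c := by
  -- `log t ≤ t - 1` at `t = a e^{-x} / c`, with equality at the maximiser `e^{-x} = c / a`
  set t := a * exp (-x) / c
  have ht : 0 < t := by positivity
  have hlog : log t = log a - x - log c := by
    rw [log_div (by positivity) hc.ne', log_mul ha.ne' (exp_pos _).ne', log_exp]; ring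
  have hbase : log (c / (a * exp 1)) = log c - log a - 1 := by
    rw [log_div hc.ne' (by positivity), log_mul ha.ne' (exp_pos _).ne', log_exp]; ring
  have hct : c * t = a * exp (-x) := by simp only [t]; field_simp
  rw [rpow_def_of_pos (by positivity), exp_le_exp, hbase]
  nlinarith [mul_le_mul_of_nonneg_left (log_le_sub_one_of_pos ht) hc.le]

theorem gaussianPDFReal_mul_exp_mul (μ : ℝ) (v : ℝ≥0) (t x : ℝ) :
    gaussianPDFReal μ v x * exp (t * x) =
      exp (μ * t + v * t ^ 2 / 2) * gaussianPDFReal (μ + v * t) v x := by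
  rcases eq_or_ne v 0 with rfl | hv
  · simp [gaussianPDFReal_zero_var]
  have hv' : (v : ℝ) ≠ 0 := by exact_mod_cast hv
  simp only [gaussianPDFReal]
  rw [mul_left_comm, mul_assoc, ← exp_add, ← exp_add]
  congr 2
  field_simp
  ring

theorem integrable_gaussianPDFReal_mul_exp_mul (μ : ℝ) (v : ℝ≥0) (t : ℝ) :
    Integrable fun x ↦ gaussianPDFReal μ v x * exp (t * x) := by
  simp_rw [gaussianPDFReal_mul_exp_mul]
  exact (integrable_gaussianPDFReal _ _).const_mul _

theorem integral_gaussianPDFReal_mul_exp_mul (μ : ℝ) {v : ℝ≥0} (hv : v ≠ 0) (t : ℝ) :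
    ∫ x, gaussianPDFReal μ v x * exp (t * x) = exp (μ * t + v * t ^ 2 / 2) := by
  simp_rw [gaussianPDFReal_mul_exp_mul, integral_const_mul,
    integral_gaussianPDFReal_eq_one _ hv, mul_one]

section ExpSubstitution

variable {E : Type*} [NormedAddCommGroup E] [NormedSpace ℝ E] {c : ℝ}

theorem image_univ_exp_mul (hc : c ≠ 0) : (fun x ↦ exp (c * x)) '' univ = Ioi 0 := by
  rw [image_univ, ← range_exp]
  exact (mul_left_surjective₀ hc).range_comp exp

theorem hasDerivWithinAt_exp_mul (c x : ℝ) :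
    HasDerivWithinAt (fun x ↦ exp (c * x)) (exp (c * x) * c) univ x :=
  ((hasDerivAt_id x).const_mul c).exp.hasDerivWithinAt.congr_deriv (by simp)

theorem injOn_exp_mul (hc : c ≠ 0) : InjOn (fun x ↦ exp (c * x)) univ :=
  fun _ _ _ _ h ↦ mul_left_cancel₀ hc (exp_injective h)

theorem integral_exp_mul_smul_comp_exp_mul (hc : c ≠ 0) (f : ℝ → E) :
    ∫ x, (|c| * exp (c * x)) • f (exp (c * x)) = ∫ u in Ioi 0, f u := by
  rw [← image_univ_exp_mul hc, integral_image_eq_integral_abs_deriv_smul MeasurableSet.univ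
    (fun x _ ↦ hasDerivWithinAt_exp_mul c x) (injOn_exp_mul hc), setIntegral_univ]
  simp only [abs_mul, abs_exp, mul_comm |c|]

theorem integrable_exp_mul_smul_comp_exp_mul_iff (hc : c ≠ 0) (f : ℝ → E) :
    Integrable (fun x ↦ (|c| * exp (c * x)) • f (exp (c * x))) ↔ IntegrableOn f (Ioi 0) := by
  rw [← image_univ_exp_mul hc, integrableOn_image_iff_integrableOn_abs_deriv_smul
    MeasurableSet.univ (fun x _ ↦ hasDerivWithinAt_exp_mul c x) (injOn_exp_mul hc),
    integrableOn_univ]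
  simp only [abs_mul, abs_exp, mul_comm |c|]

end ExpSubstitution

theorem svq_eq_gaussianPDFReal (σ φ a : ℝ) :
    svq σ φ a = gaussianPDFReal (φ * a) (σ ^ 2).toNNReal := by
  ext b
  rw [gaussianPDFReal, Real.coe_toNNReal _ (sq_nonneg σ), svq]

section Transition

variable (σ φ : ℝ)

theorem svq_nonneg (a b : ℝ) : 0 ≤ svq σ φ a b := by
  rw [svq_eq_gaussianPDFReal]
  exact gaussianPDFReal_nonneg _ _ _

theorem svq_le (a b : ℝ) : svq σ φ a b ≤ (√(2 * π * σ ^ 2))⁻¹ := by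
  refine mul_le_of_le_one_right (by positivity) (exp_le_one_iff.mpr ?_)
  exact div_nonpos_of_nonpos_of_nonneg (neg_nonpos.mpr (sq_nonneg _)) (by positivity)

theorem integrable_svq (a : ℝ) : Integrable (svq σ φ a) := by
  rw [svq_eq_gaussianPDFReal]
  exact integrable_gaussianPDFReal _ _

theorem integrable_svq_mul_exp (a : ℝ) :
    Integrable fun b ↦ svq σ φ a b * exp (-b / 2) := by
  simpa [svq_eq_gaussianPDFReal, neg_div, ← neg_mul, div_eq_inv_mul] using
    integrable_gaussianPDFReal_mul_exp_mul (φ * a) (σ ^ 2).toNNReal (-2⁻¹)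

theorem integral_svq (hσ : σ ≠ 0) (a : ℝ) : ∫ b, svq σ φ a b = 1 := by
  rw [svq_eq_gaussianPDFReal]
  exact integral_gaussianPDFReal_eq_one _ (by simpa using hσ)

theorem integral_svq_mul_exp (hσ : σ ≠ 0) (a : ℝ) :
    ∫ b, svq σ φ a b * exp (-b / 2) = exp (-(φ * a) / 2 + σ ^ 2 / 8) := by
  have := integral_gaussianPDFReal_mul_exp_mul (φ * a) (v := (σ ^ 2).toNNReal)
    (by simpa using hσ) (-2⁻¹)
  rw [svq_eq_gaussianPDFReal]
  rw [Real.coe_toNNReal _ (sq_nonneg σ)] at this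
  convert this using 2
  · ext b
    congr 2
    ring
  · ring

end Transition

section Emission

variable {β : ℝ}

theorem svg_nonneg (β x y : ℝ) : 0 ≤ svg β x y := by
  unfold svg
  positivity

theorem svg_le_mul_exp (β x y : ℝ) : svg β x y ≤ (√(2 * π * β ^ 2))⁻¹ * exp (-x / 2) := by
  refine mul_le_mul_of_nonneg_left (exp_le_exp.mpr ?_) (by positivity)
  have : 0 ≤ y ^ 2 * exp (-x) / (2 * β ^ 2) := by positivity
  linarith

theorem svg_mul_exp_le (hβ : β ≠ 0) {y c : ℝ} (hy : y ≠ 0) (hc : 0 < c) (x : ℝ) :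
    svg β x y * exp ((1 / 2 - c) * x) ≤
      (√(2 * π * β ^ 2))⁻¹ * (c / (y ^ 2 / (2 * β ^ 2) * exp 1)) ^ c := by
  rw [svg, mul_assoc, ← exp_add]
  refine mul_le_mul_of_nonneg_left (le_of_eq_of_le ?_
    (exp_neg_mul_sub_mul_exp_neg_le (by positivity) hc x)) (by positivity)
  congr 1
  ring

theorem svg_le (hβ : β ≠ 0) {y : ℝ} (hy : y ≠ 0) (x : ℝ) :
    svg β x y ≤ 1 / (|y| * √(2 * π * exp 1)) := by
  have h := svg_mul_exp_le hβ hy one_half_pos x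
  rw [sub_self, zero_mul, exp_zero, mul_one, ← sqrt_eq_rpow] at h
  refine h.trans_eq ?_
  rw [show (1 / 2) / (y ^ 2 / (2 * β ^ 2) * exp 1) = β ^ 2 / (y ^ 2 * exp 1) by field_simp,
    sqrt_div' _ (by positivity), sqrt_mul (by positivity), sqrt_mul' _ (exp_pos 1).le,
    sqrt_mul (by positivity), sqrt_sq_eq_abs, sqrt_sq_eq_abs]
  field_simp
  rw [sqrt_mul' _ (exp_pos 1).le, sqrt_mul zero_le_two]

/-- The integrand of `integral_exp_mul_smul_comp_exp_mul` at `c = -1/2`, i.e. after the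
substitution `u = e^{-x/2}`. -/
theorem svg_eq_smul_comp_exp (β x y : ℝ) :
    svg β x y = 2 * (√(2 * π * β ^ 2))⁻¹ * ((|-(1 / 2 : ℝ)| * exp (-(1 / 2) * x)) •
      exp (-(y ^ 2 / (2 * β ^ 2)) * exp (-(1 / 2) * x) ^ 2)) := by
  have hsq : exp (-(1 / 2) * x) ^ 2 = exp (-x) := by
    rw [← exp_nat_mul]
    ring_nf
  rw [svg, smul_eq_mul, hsq, abs_neg, abs_of_pos one_half_pos, mul_assoc (1 / 2), ← exp_add]
  ring_nf

theorem integrable_svg (hβ : β ≠ 0) {y : ℝ} (hy : y ≠ 0) : Integrable fun x ↦ svg β x y := by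
  simp_rw [svg_eq_smul_comp_exp]
  refine Integrable.const_mul ?_ _
  rw [integrable_exp_mul_smul_comp_exp_mul_iff (by norm_num)
    (fun u ↦ exp (-(y ^ 2 / (2 * β ^ 2)) * u ^ 2))]
  exact (integrable_exp_neg_mul_sq (by positivity)).integrableOn

theorem integral_svg (hβ : β ≠ 0) {y : ℝ} (hy : y ≠ 0) : ∫ x, svg β x y = 1 / |y| := by
  simp_rw [svg_eq_smul_comp_exp]
  rw [integral_const_mul, integral_exp_mul_smul_comp_exp_mul (by norm_num)
    (fun u ↦ exp (-(y ^ 2 / (2 * β ^ 2)) * u ^ 2)), integral_gaussian_Ioi,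
    show π / (y ^ 2 / (2 * β ^ 2)) = (2 * π * β ^ 2) / y ^ 2 by field_simp,
    sqrt_div' _ (sq_nonneg y), sqrt_sq_eq_abs]
  have : 0 < √(2 * π * β ^ 2) := by positivity
  field_simp

end Emission

/-- The two-step integrated density `D_{θ,x₀}(y_{0:2})`. -/
noncomputable def svTwoStep (β σ φ x₀ y₁ y₂ : ℝ) : ℝ :=
  ∫ x₁, ∫ x₂, svq σ φ x₀ x₁ * svg β x₁ y₁ * svq σ φ x₁ x₂ * svg β x₂ y₂

section TwoStep

variable {β σ : ℝ} (φ : ℝ)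

theorem integral_svq_mul_svg_le (hβ : β ≠ 0) (hσ : σ ≠ 0) {y : ℝ} (hy : y ≠ 0) (a : ℝ) :
    ∫ b, svq σ φ a b * svg β b y ≤ 1 / (|y| * √(2 * π * exp 1)) := by
  simpa [integral_svq σ φ hσ] using integral_mul_le_of_le (integrable_svq σ φ a) (svq_nonneg σ φ a)
    (svg_nonneg β · y) (svg_le hβ hy)

theorem integral_svq_mul_svg_le_exp (hσ : σ ≠ 0) (y a : ℝ) :
    ∫ b, svq σ φ a b * svg β b y ≤ (√(2 * π * β ^ 2))⁻¹ * exp (-(φ * a) / 2 + σ ^ 2 / 8) := by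
  calc ∫ b, svq σ φ a b * svg β b y
      ≤ ∫ b, (√(2 * π * β ^ 2))⁻¹ * (svq σ φ a b * exp (-b / 2)) := by
        refine integral_mono_of_nonneg (ae_of_all _ fun b ↦ ?_)
          ((integrable_svq_mul_exp σ φ a).const_mul _) (ae_of_all _ fun b ↦ ?_)
        · exact mul_nonneg (svq_nonneg σ φ a b) (svg_nonneg β b y)
        · dsimp only
          rw [mul_left_comm]
          exact mul_le_mul_of_nonneg_left (svg_le_mul_exp β b y) (svq_nonneg σ φ a b)
    _ = _ := by rw [integral_const_mul, integral_svq_mul_exp σ φ hσ]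

variable (x₀ : ℝ) {y₁ y₂ : ℝ}

theorem svTwoStep_eq : svTwoStep β σ φ x₀ y₁ y₂ =
    ∫ x₁, svq σ φ x₀ x₁ * (svg β x₁ y₁ * ∫ x₂, svq σ φ x₁ x₂ * svg β x₂ y₂) := by
  refine integral_congr_ae (ae_of_all _ fun x₁ ↦ ?_)
  dsimp only
  rw [← integral_const_mul, ← integral_const_mul]
  congr with x₂
  ring

theorem svTwoStep_le_one_div (hβ : β ≠ 0) (hσ : σ ≠ 0) (hy₁ : y₁ ≠ 0) (hy₂ : y₂ ≠ 0) :
    svTwoStep β σ φ x₀ y₁ y₂ ≤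
      1 / (|y₁| * |y₂| * √(2 * π * σ ^ 2) * √(2 * π * exp 1)) := by
  set J := fun x₁ ↦ ∫ x₂, svq σ φ x₁ x₂ * svg β x₂ y₂
  have hJ₀ : ∀ x₁, 0 ≤ J x₁ := fun x₁ ↦
    integral_nonneg fun x₂ ↦ mul_nonneg (svq_nonneg σ φ x₁ x₂) (svg_nonneg β x₂ y₂)
  calc svTwoStep β σ φ x₀ y₁ y₂ = ∫ x₁, svg β x₁ y₁ * (svq σ φ x₀ x₁ * J x₁) := by
        rw [svTwoStep_eq]
        congr with x₁
        ring
    _ ≤ ((√(2 * π * σ ^ 2))⁻¹ * (1 / (|y₂| * √(2 * π * exp 1)))) * ∫ x₁, svg β x₁ y₁ :=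
        integral_mul_le_of_le (integrable_svg hβ hy₁) (svg_nonneg β · y₁)
          (fun x₁ ↦ mul_nonneg (svq_nonneg σ φ x₀ x₁) (hJ₀ x₁))
          (fun x₁ ↦ mul_le_mul (svq_le σ φ x₀ x₁) (integral_svq_mul_svg_le φ hβ hσ hy₂ x₁)
            (hJ₀ x₁) (by positivity))
    _ = _ := by
        rw [integral_svg hβ hy₁]
        field_simp

theorem svTwoStep_le_exp_div (hβ : 0 < β) (hσ : σ ≠ 0) (hφ : 0 < 1 + φ) (hy₁ : y₁ ≠ 0) :
    svTwoStep β σ φ x₀ y₁ y₂ ≤ exp (σ ^ 2 / 8) / (2 * π * β ^ ((1 : ℝ) - φ)) *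
      ((1 + φ) * exp (-1) / y₁ ^ 2) ^ ((1 + φ) / 2) := by
  set B := √(2 * π * β ^ 2)
  set K := ((1 + φ) * exp (-1) / y₁ ^ 2) ^ ((1 + φ) / 2)
  have hK : ((1 + φ) / 2 / (y₁ ^ 2 / (2 * β ^ 2) * exp 1)) ^ ((1 + φ) / 2) = β ^ (1 + φ) * K := by
    have hbase : (1 + φ) / 2 / (y₁ ^ 2 / (2 * β ^ 2) * exp 1) =
        β ^ (2 : ℝ) * ((1 + φ) * exp (-1) / y₁ ^ 2) := by
      rw [rpow_two, exp_neg]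
      field_simp
    rw [hbase, mul_rpow (by positivity) (by positivity), ← rpow_mul hβ.le]
    congr 2
    ring
  have hB : B⁻¹ * B⁻¹ * β ^ (1 + φ) = 1 / (2 * π * β ^ ((1 : ℝ) - φ)) := by
    have hsplit : β ^ 2 = β ^ ((1 : ℝ) - φ) * β ^ (1 + φ) := by
      rw [← rpow_add hβ, ← rpow_two]
      ring_nf
    rw [← mul_inv, mul_self_sqrt (by positivity), hsplit]
    have : 0 < β ^ (1 + φ) := rpow_pos_of_pos hβ _
    field_simp
  have hbound : ∀ x₁, svg β x₁ y₁ * ∫ x₂, svq σ φ x₁ x₂ * svg β x₂ y₂ ≤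
      exp (σ ^ 2 / 8) / (2 * π * β ^ ((1 : ℝ) - φ)) * K := fun x₁ ↦
    calc svg β x₁ y₁ * ∫ x₂, svq σ φ x₁ x₂ * svg β x₂ y₂
        ≤ svg β x₁ y₁ * (B⁻¹ * exp (-(φ * x₁) / 2 + σ ^ 2 / 8)) :=
          mul_le_mul_of_nonneg_left (integral_svq_mul_svg_le_exp φ hσ y₂ x₁) (svg_nonneg β x₁ y₁)
      _ = B⁻¹ * exp (σ ^ 2 / 8) * (svg β x₁ y₁ * exp ((1 / 2 - (1 + φ) / 2) * x₁)) := by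
          rw [exp_add]
          ring_nf
      _ ≤ B⁻¹ * exp (σ ^ 2 / 8) *
            (B⁻¹ * ((1 + φ) / 2 / (y₁ ^ 2 / (2 * β ^ 2) * exp 1)) ^ ((1 + φ) / 2)) :=
          mul_le_mul_of_nonneg_left (svg_mul_exp_le hβ.ne' hy₁ (half_pos hφ) x₁) (by positivity)
      _ = _ := by
          rw [hK, div_eq_mul_one_div _ (2 * π * _), ← hB]
          ring
  calc svTwoStep β σ φ x₀ y₁ y₂
      ≤ (exp (σ ^ 2 / 8) / (2 * π * β ^ ((1 : ℝ) - φ)) * K) * ∫ x₁, svq σ φ x₀ x₁ := by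
        rw [svTwoStep_eq]
        exact integral_mul_le_of_le (integrable_svq σ φ x₀) (svq_nonneg σ φ x₀)
          (fun x₁ ↦ mul_nonneg (svg_nonneg β x₁ y₁)
            (integral_nonneg fun x₂ ↦ mul_nonneg (svq_nonneg σ φ x₁ x₂) (svg_nonneg β x₂ y₂)))
          hbound
    _ = _ := by rw [integral_svq σ φ hσ, mul_one]

end TwoStep

/-- For the stochastic volatility model with `β, σ > 0`, `|φ| < 1` and
`y₁, y₂ ≠ 0`, the two-step integrated density
`D = ∬ q(x₀,x₁) g(x₁,y₁) q(x₁,x₂) g(x₂,y₂) dx₁ dx₂` satisfies both bounds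
`D ≤ 1/(|y₁||y₂|√(2πσ²)√(2πe))` and
`D ≤ (e^{σ²/8}/(2πβ^{1−φ})) ((1+φ)e^{−1}/y₁²)^{(1+φ)/2}`. -/
theorem sv_two_step_bounds (β σ φ x₀ y₁ y₂ : ℝ) (hβ : 0 < β) (hσ : 0 < σ)
    (hφ : |φ| < 1) (hy₁ : y₁ ≠ 0) (hy₂ : y₂ ≠ 0) :
    (∫ x₁, ∫ x₂, svq σ φ x₀ x₁ * svg β x₁ y₁ * svq σ φ x₁ x₂ * svg β x₂ y₂)
        ≤ 1 / (|y₁| * |y₂| * Real.sqrt (2 * Real.pi * σ ^ 2) *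
            Real.sqrt (2 * Real.pi * Real.exp 1)) ∧
    (∫ x₁, ∫ x₂, svq σ φ x₀ x₁ * svg β x₁ y₁ * svq σ φ x₁ x₂ * svg β x₂ y₂)
        ≤ Real.exp (σ ^ 2 / 8) / (2 * Real.pi * β ^ ((1 : ℝ) - φ)) *
            ((1 + φ) * Real.exp (-1) / y₁ ^ 2) ^ ((1 + φ) / 2) :=
  ⟨svTwoStep_le_one_div φ x₀ hβ.ne' hσ.ne' hy₁ hy₂,
    svTwoStep_le_exp_div φ x₀ hβ hσ.ne' (by linarith [(abs_lt.mp hφ).1]) hy₁⟩
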